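/- arXiv:2101.06732 — 4 statements merged into one kernel-verified Lean document; each statement's English description precedes it below -/
import Mathlib

section
/- Let G be a graph whose vertex set is partitioned into h pairwise disjoint sets V_1, ..., V_h, each of size s, where s is a positive even integer. Suppose that for each pair of indices 1 <= i < j <= h, there are at most s^2/h^2 edges with one endpoint in V_i and the other in V_j. Then there exist s/2 pairwise disjoint independent sets I_1, ..., I_{s/2} in G such that each I_t contains exactly one vertex from each set V_i. -/
/-!
Label the vertices of each part bijectively by `Fin s`, choosing the labelling of every part
independently and uniformly at random; each label class is then a transversal of the parts.
An edge between two different parts joins two vertices of equal label with probability `1 / s`,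
and there are at most `(h choose 2) s² / h² ≤ s² / 2` such edges, so some labelling has at most
`s / 2` monochromatic edges. Discarding the labels of these edges leaves at least `s / 2` label
classes, and they are independent.
-/

open Finset Equiv

variable {ι α V : Type*}

section Permutations

variable [Fintype ι] [DecidableEq ι] [Fintype α] [DecidableEq α]

/-- Post-composing `π j` with the transposition that sends `π j b` to `c` is a bijection
`{π | π i a = π j b} × α ≃ (ι → Perm α)`. -/
theorem card_filter_apply_eq_apply_mul_card {i j : ι} (hij : i ≠ j) (a b : α) :
    #{π : ι → Perm α | π i a = π j b} * Fintype.card α = Fintype.card (ι → Perm α) := by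
  let E : {π : ι → Perm α // π i a = π j b} × α ≃ (ι → Perm α) :=
    { toFun := fun x => Function.update x.1.1 j (swap (x.1.1 j b) x.2 * x.1.1 j)
      invFun := fun π =>
        (⟨Function.update π j (swap (π j b) (π i a) * π j), by
          simp [Function.update_of_ne hij]⟩, π j b)
      left_inv := by
        rintro ⟨⟨π, hπ⟩, c⟩
        ext1
        · ext1
          simp [Function.update_of_ne hij, hπ, ← mul_assoc, swap_comm c]
        · simp
      right_inv := fun π => by simp [← mul_assoc, swap_comm (π i a)] }
  simpa [Fintype.card_subtype] using Fintype.card_congr E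

end Permutations

theorem exists_card_filter_mul_le_card {β γ : Type*} [Fintype β] [Nonempty β] (A : Finset γ)
    (r : β → γ → Prop) [∀ b x, Decidable (r b x)] (k : ℕ)
    (hr : ∀ x ∈ A, #{b | r b x} * k = Fintype.card β) :
    ∃ b, #{x ∈ A | r b x} * k ≤ #A := by
  have hsum : ∑ b, #{x ∈ A | r b x} * k = ∑ _b : β, #A := by
    calc ∑ b, #{x ∈ A | r b x} * k = ∑ x ∈ A, #{b | r b x} * k := by
          rw [← sum_mul, ← sum_mul]
          exact congrArg (· * k) (sum_card_bipartiteAbove_eq_sum_card_bipartiteBelow r)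
      _ = ∑ _b : β, #A := by
          rw [sum_congr rfl hr, sum_const, sum_const, card_univ, smul_eq_mul, smul_eq_mul,
            mul_comm]
  obtain ⟨b, -, hb⟩ := exists_le_of_sum_le univ_nonempty hsum.le
  exact ⟨b, hb⟩

theorem card_filter_fst_lt_snd_mul_two_le [Fintype ι] [LinearOrder ι] :
    #{q : ι × ι | q.1 < q.2} * 2 ≤ Fintype.card ι ^ 2 := by
  have hswap : #{q : ι × ι | q.2 < q.1} = #{q : ι × ι | q.1 < q.2} :=
    card_equiv (prodComm ι ι) fun q => by simp
  calc #{q : ι × ι | q.1 < q.2} * 2 = #{q : ι × ι | q.1 < q.2} + #{q : ι × ι | q.2 < q.1} := by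
        rw [hswap, mul_two]
    _ = #{q : ι × ι | q.1 < q.2 ∨ q.2 < q.1} := by
        rw [filter_or, card_union_of_disjoint (disjoint_filter.2 fun q _ h h' => lt_asymm h h')]
    _ ≤ Fintype.card ι ^ 2 := by
        simpa [sq] using card_filter_le (univ : Finset (ι × ι)) _

theorem exists_equiv_prod_of_partition [Fintype V] [Fintype α] {P : ι → Finset V}
    (hdisj : ∀ i j, i ≠ j → Disjoint (P i) (P j)) (hcover : ∀ v, ∃ i, v ∈ P i)
    (hcard : ∀ i, #(P i) = Fintype.card α) :
    ∃ e : V ≃ ι × α, ∀ v i, v ∈ P i ↔ (e v).1 = i := by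
  classical
  choose part hpart using hcover
  have hmem (v : V) (i : ι) : v ∈ P i ↔ part v = i :=
    ⟨fun hv => by_contra fun hne => disjoint_left.1 (hdisj _ _ hne) (hpart v) hv,
      fun h => h ▸ hpart v⟩
  have F (i : ι) : {v // part v = i} ≃ α := Fintype.equivOfCardEq <| by
    rw [← hcard i, Fintype.card_subtype]
    congr 1
    ext v
    simp [hmem]
  exact ⟨(sigmaFiberEquiv part).symm.trans ((sigmaCongrRight F).trans (sigmaEquivProd ι α)),
    fun v i => by simp [hmem]⟩

def relabel (e : V ≃ ι × α) (π : ι → Perm α) : V ≃ ι × α :=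
  e.trans (prodShear (Equiv.refl ι) π)

@[simp]
theorem relabel_apply (e : V ≃ ι × α) (π : ι → Perm α) (v : V) :
    relabel e π v = ((e v).1, π (e v).1 (e v).2) := rfl

theorem card_filter_snd_eq_inter_eq_one [Fintype V] [DecidableEq V] [DecidableEq α]
    (f : V ≃ ι × α) {P : ι → Finset V} (hP : ∀ v i, v ∈ P i ↔ (f v).1 = i) (t : α) (i : ι) :
    #(({v | (f v).2 = t} : Finset V) ∩ P i) = 1 := by
  refine card_eq_one.2 ⟨f.symm (i, t), ?_⟩
  ext v
  simp [hP, Equiv.eq_symm_apply, Prod.ext_iff, and_comm]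

section Graph

variable [LinearOrder ι] [Fintype V] (G : SimpleGraph V) [DecidableRel G.Adj]

def crossEdges (part : V → ι) : Finset (V × V) :=
  {p | G.Adj p.1 p.2 ∧ part p.1 < part p.2}

theorem card_crossEdges_mul_two_le [Fintype ι] {P : ι → Finset V} {part : V → ι}
    (hP : ∀ v i, v ∈ P i ↔ part v = i) {s : ℕ}
    (hedges : ∀ i j, i < j → #{p ∈ P i ×ˢ P j | G.Adj p.1 p.2} * Fintype.card ι ^ 2 ≤ s ^ 2) :
    #(crossEdges G part) * 2 ≤ s ^ 2 := by
  classical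
  set B : Finset (ι × ι) := {q | q.1 < q.2}
  have hcard : #(crossEdges G part) = ∑ q ∈ B, #{p ∈ P q.1 ×ˢ P q.2 | G.Adj p.1 p.2} := by
    rw [card_eq_sum_card_fiberwise (f := fun p => (part p.1, part p.2)) (t := B)
      fun p hp => mem_coe.2 (mem_filter.2 ⟨mem_univ _, (mem_filter.1 hp).2.2⟩)]
    refine sum_congr rfl fun q _ => congrArg card ?_
    ext p
    simp only [crossEdges, mem_filter, mem_univ, true_and, mem_product, hP, Prod.ext_iff]
    grind
  rcases (Fintype.card ι).eq_zero_or_pos with hι | hι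
  · have : IsEmpty ι := Fintype.card_eq_zero_iff.1 hι
    simp [hcard, B]
  refine Nat.le_of_mul_le_mul_right ?_ (pow_pos hι 2)
  calc #(crossEdges G part) * 2 * Fintype.card ι ^ 2
      = (∑ q ∈ B, #{p ∈ P q.1 ×ˢ P q.2 | G.Adj p.1 p.2} * Fintype.card ι ^ 2) * 2 := by
        rw [hcard, ← sum_mul]; ring
    _ ≤ (∑ _q ∈ B, s ^ 2) * 2 := by
        gcongr with q hq
        exact hedges _ _ (mem_filter.1 hq).2
    _ = s ^ 2 * (#B * 2) := by rw [sum_const, smul_eq_mul]; ring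
    _ ≤ s ^ 2 * Fintype.card ι ^ 2 := by gcongr; exact card_filter_fst_lt_snd_mul_two_le

variable [DecidableEq α]

def monochromaticEdges (f : V ≃ ι × α) : Finset (V × V) :=
  {p ∈ crossEdges G fun v => (f v).1 | (f p.1).2 = (f p.2).2}

theorem exists_relabel_card_monochromaticEdges_mul_le [Fintype ι] [Fintype α] (e : V ≃ ι × α) :
    ∃ π, #(monochromaticEdges G (relabel e π)) * Fintype.card α ≤
      #(crossEdges G fun v => (e v).1) :=
  exists_card_filter_mul_le_card (crossEdges G fun v => (e v).1)
    (fun (π : ι → Perm α) p => π (e p.1).1 (e p.1).2 = π (e p.2).1 (e p.2).2) _ fun p hp => by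
      simpa using card_filter_apply_eq_apply_mul_card (mem_filter.1 hp).2.2.ne _ _

theorem not_adj_of_notMem_image_monochromaticEdges (f : V ≃ ι × α) {t : α}
    (ht : t ∉ (monochromaticEdges G f).image fun p => (f p.1).2)
    {u v : V} (hu : (f u).2 = t) (hv : (f v).2 = t) : ¬ G.Adj u v := by
  intro hadj
  have hmono {x y : V} (hxy : G.Adj x y) (hlt : (f x).1 < (f y).1) (hx : (f x).2 = t)
      (hy : (f y).2 = t) : False :=
    ht (mem_image.2 ⟨(x, y), by simp [monochromaticEdges, crossEdges, hxy, hlt, hx, hy], hx⟩)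
  rcases lt_trichotomy (f u).1 (f v).1 with hlt | heq | hgt
  · exact hmono hadj hlt hu hv
  · exact G.loopless.irrefl v (f.injective (Prod.ext heq (hu.trans hv.symm)) ▸ hadj)
  · exact hmono hadj.symm hgt hv hu

theorem exists_indep_transversals [Fintype ι] [Fintype α] [DecidableEq V] (f : V ≃ ι × α)
    {P : ι → Finset V} (hP : ∀ v i, v ∈ P i ↔ (f v).1 = i) {k : ℕ}
    (hk : k + #(monochromaticEdges G f) ≤ Fintype.card α) :
    ∃ I : Fin k → Finset V,
      (∀ t t', t ≠ t' → Disjoint (I t) (I t')) ∧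
      (∀ t, ∀ u ∈ I t, ∀ v ∈ I t, ¬ G.Adj u v) ∧
      (∀ t i, #(I t ∩ P i) = 1) := by
  set good := univ \ (monochromaticEdges G f).image fun p => (f p.1).2
  have hgood : k ≤ #good := by
    have := card_image_le (s := monochromaticEdges G f) (f := fun p => (f p.1).2)
    rw [card_univ_sdiff]
    omega
  obtain ⟨σ⟩ := Function.Embedding.nonempty_of_card_le (α := Fin k) (β := good) (by simpa)
  refine ⟨fun n => {v | (f v).2 = σ n}, fun n n' hne => ?_, fun n u hu v hv => ?_,
    fun n i => card_filter_snd_eq_inter_eq_one f hP _ i⟩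
  · exact disjoint_filter.2 fun v _ h h' => hne (σ.injective (Subtype.ext (h.symm.trans h')))
  · exact not_adj_of_notMem_image_monochromaticEdges G f (mem_sdiff.1 (σ n).2).2
      (mem_filter.1 hu).2 (mem_filter.1 hv).2

end Graph

theorem stmt3_general {V : Type} [Fintype V] [DecidableEq V]
    (G : SimpleGraph V) [DecidableRel G.Adj]
    (h s : ℕ)
    (P : Fin h → Finset V)
    (hdisj : ∀ i j, i ≠ j → Disjoint (P i) (P j))
    (hcover : ∀ v : V, ∃ i, v ∈ P i)
    (hsize : ∀ i, (P i).card = s)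
    (hedges : ∀ i j : Fin h, i < j →
      ((P i ×ˢ P j).filter (fun p => G.Adj p.1 p.2)).card * h ^ 2 ≤ s ^ 2) :
    ∃ I : Fin (s / 2) → Finset V,
      (∀ t t', t ≠ t' → Disjoint (I t) (I t')) ∧
      (∀ t, ∀ u ∈ I t, ∀ v ∈ I t, ¬ G.Adj u v) ∧
      (∀ t i, (I t ∩ P i).card = 1) := by
  obtain ⟨e, he⟩ := exists_equiv_prod_of_partition (α := Fin s) hdisj hcover (by simpa using hsize)
  have hcross : #(crossEdges G fun v => (e v).1) * 2 ≤ s ^ 2 :=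
    card_crossEdges_mul_two_le G he fun i j hij => by simpa using hedges i j hij
  obtain ⟨π, hπ⟩ := exists_relabel_card_monochromaticEdges_mul_le G e
  have hmono : #(monochromaticEdges G (relabel e π)) * 2 ≤ s := by
    have hsub : #(monochromaticEdges G (relabel e π)) ≤ #(crossEdges G fun v => (e v).1) :=
      card_filter_le _ _
    simp only [Fintype.card_fin] at hπ
    nlinarith
  exact exists_indep_transversals G (relabel e π) (by simpa using he)
    (by simp only [Fintype.card_fin]; omega)

/-- Let `G` be a graph with vertex set partitioned into `h` sets `P 0, …, P (h-1)`, each of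
size `s`, `s` even and positive, such that for all `i < j` there are at most `s^2 / h^2`
edges between `P i` and `P j`. Then there are `s/2` pairwise disjoint independent sets,
each containing exactly one vertex from each part. -/
theorem stmt3 {V : Type} [Fintype V] [DecidableEq V]
    (G : SimpleGraph V) [DecidableRel G.Adj]
    (h s : ℕ) (hs : 0 < s) (hse : Even s)
    (P : Fin h → Finset V)
    (hdisj : ∀ i j, i ≠ j → Disjoint (P i) (P j))
    (hcover : ∀ v : V, ∃ i, v ∈ P i)
    (hsize : ∀ i, (P i).card = s)
    (hedges : ∀ i j : Fin h, i < j →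
      ((P i ×ˢ P j).filter (fun p => G.Adj p.1 p.2)).card * h ^ 2 ≤ s ^ 2) :
    ∃ I : Fin (s / 2) → Finset V,
      (∀ t t', t ≠ t' → Disjoint (I t) (I t')) ∧
      (∀ t, ∀ u ∈ I t, ∀ v ∈ I t, ¬ G.Adj u v) ∧
      (∀ t i, (I t ∩ P i).card = 1) :=
  stmt3_general G h s P hdisj hcover hsize hedges
end

section
/- Let H be a strongly connected simple digraph with at least one arc, let k be a positive integer, and let T be a tournament admitting a vertex ordering of width at most c that does not contain k pairwise vertex-disjoint immersion copies of H. Then there exists a set F of at most 2(k-1)c arcs of T such that T - F contains no immersion copy of H. -/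
/-- `A` is the arc relation of a tournament on `V`. -/
def IsTournament {V : Type} (A : V → V → Prop) : Prop :=
  (∀ v, ¬ A v v) ∧ ∀ u v, u ≠ v → (A u v ↔ ¬ A v u)

/-- `l` is a nonempty directed walk (as a list of arcs) from `a` to `b` in the digraph `A`. -/
def IsArcWalk {V : Type} (A : V → V → Prop) (l : List (V × V)) (a b : V) : Prop :=
  l ≠ [] ∧ (∀ e ∈ l, A e.1 e.2) ∧ List.Chain' (fun e f => e.2 = f.1) l ∧
    l.head?.map Prod.fst = some a ∧ l.getLast?.map Prod.snd = some b

/-- `φ` (on vertices) together with arc-lists `P` (paths for the arcs of `H`) form an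
immersion copy of the digraph `H` inside the digraph `A`: vertices map injectively, each
arc of `H` maps to a directed path (a walk without repeated arcs) between the images of its
endpoints, and these paths are pairwise arc-disjoint. -/
def IsImmersionCopy {W V : Type} (H : W → W → Prop) (A : V → V → Prop)
    (φ : W → V) (P : W → W → List (V × V)) : Prop :=
  Function.Injective φ ∧
  (∀ u v, H u v → IsArcWalk A (P u v) (φ u) (φ v)) ∧
  (∀ u v, H u v → (P u v).Nodup) ∧
  (∀ u v, ¬ H u v → P u v = []) ∧
  (∀ u v u' v', H u v → H u' v' → (u, v) ≠ (u', v') →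
    ∀ e, e ∈ P u v → e ∉ P u' v')

/-- The arcs of an immersion copy: all arcs used by the paths. -/
def copyArcs {W V : Type} (P : W → W → List (V × V)) : Set (V × V) :=
  {e | ∃ u v, e ∈ P u v}

/-- The vertices of an immersion copy: the images of vertices together with all
endpoints of arcs used by the paths. -/
def copyVerts {W V : Type} (φ : W → V) (P : W → W → List (V × V)) : Set V :=
  Set.range φ ∪ {x | ∃ e ∈ copyArcs P, x = e.1 ∨ x = e.2}

/-- The arcs of `A` crossing backwards over position `α` of the ordering `σ`
(`σ` is 0-based: these are the arcs `(u,v)` with `σ v ≤ α < σ u`). -/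
def cutSet {V : Type} (A : V → V → Prop) {n : ℕ} (σ : V ≃ Fin n) (α : ℕ) : Set (V × V) :=
  {e | A e.1 e.2 ∧ (σ e.2 : ℕ) ≤ α ∧ α < (σ e.1 : ℕ)}

/-! Fix an ordering `σ` of width at most `c` and induct on `k`, restricted to copies lying in a
suffix `{x | t ≤ σ x}` of the ordering. Let `j` be the least position such that some copy of
`H` lies in `[t, j]`. Delete the backward arcs over `j - 1` and over `j`: at most `2c` arcs.
Since a copy of a strongly connected `H` is strongly connected along its own arcs, a surviving
copy cannot have vertices on both sides of either cut, so it lies entirely in `[t, j - 1]`,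
at the single position `j`, or beyond `j`. The first is excluded by the minimality of `j`, the
second because a copy has at least two vertices, and copies beyond `j` are handled by
induction, since together with the copy in `[t, j]` any `k` disjoint ones there would form
`k + 1` disjoint copies. -/

open Relation

variable {W V : Type}

def deleteArcs (A : V → V → Prop) (F : Set (V × V)) : V → V → Prop :=
  fun a b => A a b ∧ (a, b) ∉ F

def HasCopyIn (H : W → W → Prop) (A : V → V → Prop) (S : Set V) : Prop :=
  ∃ φ P, IsImmersionCopy H A φ P ∧ copyVerts φ P ⊆ S

def HasDisjointCopiesIn (H : W → W → Prop) (A : V → V → Prop) (S : Set V) (k : ℕ) : Prop :=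
  ∃ (φs : Fin k → W → V) (Ps : Fin k → W → W → List (V × V)),
    (∀ i, IsImmersionCopy H A (φs i) (Ps i) ∧ copyVerts (φs i) (Ps i) ⊆ S) ∧
    Pairwise fun i i' => Disjoint (copyVerts (φs i) (Ps i)) (copyVerts (φs i') (Ps i'))

theorem IsArcWalk.reflTransGen_of_mem {A : V → V → Prop} :
    ∀ {l : List (V × V)} {a b : V}, IsArcWalk A l a b → ∀ e ∈ l,
      ReflTransGen (fun p q => (p, q) ∈ l) a e.1 ∧ ReflTransGen (fun p q => (p, q) ∈ l) e.2 b
  | [], _, _, hl => (hl.1 rfl).elim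
  | [e], _, _, ⟨_, _, _, ha, hb⟩ => by
    simp only [List.head?_cons, List.getLast?_singleton, Option.map_some,
      Option.some.injEq] at ha hb
    rintro e' he'
    obtain rfl := List.mem_singleton.1 he'
    exact ⟨ha ▸ .refl, hb ▸ .refl⟩
  | e :: f :: l, a, b, ⟨_, hA, hch, ha, hb⟩ => by
    have hef : e.2 = f.1 := (List.isChain_cons_cons.1 hch).1
    have htail : IsArcWalk A (f :: l) e.2 b :=
      ⟨List.cons_ne_nil _ _, fun x hx => hA x (List.mem_cons_of_mem _ hx), hch.tail,
        by simp [hef], by simpa using hb⟩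
    have ha : e.1 = a := by simpa using ha
    have hlift : ∀ {x y}, ReflTransGen (fun p q => (p, q) ∈ f :: l) x y →
        ReflTransGen (fun p q => (p, q) ∈ e :: f :: l) x y :=
      fun h => ReflTransGen.mono (fun _ _ h => List.mem_cons_of_mem _ h) _ _ h
    have hstep : ReflTransGen (fun p q => (p, q) ∈ e :: f :: l) a e.2 :=
      .single (by simp [← ha])
    intro e' he'
    rcases List.mem_cons.1 he' with rfl | he'
    · obtain ⟨hf1, hf2⟩ := htail.reflTransGen_of_mem f List.mem_cons_self
      exact ⟨ha ▸ .refl, (hlift hf1).trans (.head (by simp) (hlift hf2))⟩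
    · obtain ⟨h1, h2⟩ := htail.reflTransGen_of_mem e' he'
      exact ⟨hstep.trans (hlift h1), hlift h2⟩

namespace IsImmersionCopy

variable {H : W → W → Prop} {A : V → V → Prop} {φ : W → V} {P : W → W → List (V × V)}

theorem mono {A' : V → V → Prop} (hA : ∀ a b, A a b → A' a b)
    (hc : IsImmersionCopy H A φ P) : IsImmersionCopy H A' φ P := by
  obtain ⟨hinj, hwalk, hnodup, hnil, hdisj⟩ := hc
  refine ⟨hinj, fun u v huv => ?_, hnodup, hnil, hdisj⟩
  obtain ⟨hne, harcs, hch, ha, hb⟩ := hwalk u v huv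
  exact ⟨hne, fun e he => hA _ _ (harcs e he), hch, ha, hb⟩

theorem adj_of_mem (hc : IsImmersionCopy H A φ P) {u v : W} {e : V × V} (he : e ∈ P u v) :
    H u v := by
  by_contra h
  simp [hc.2.2.2.1 u v h] at he

theorem adj_of_mem_copyArcs (hc : IsImmersionCopy H A φ P) {e : V × V}
    (he : e ∈ copyArcs P) : A e.1 e.2 := by
  obtain ⟨u, v, he⟩ := he
  exact (hc.2.1 u v (hc.adj_of_mem he)).2.1 e he

theorem copyVerts_nontrivial [Nontrivial W] (hc : IsImmersionCopy H A φ P) :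
    (copyVerts φ P).Nontrivial := by
  obtain ⟨u, v, huv⟩ := exists_pair_ne W
  exact ⟨φ u, Or.inl ⟨u, rfl⟩, φ v, Or.inl ⟨v, rfl⟩, hc.1.ne huv⟩

theorem reflTransGen_of_mem_path (hc : IsImmersionCopy H A φ P) {u v : W} {e : V × V}
    (he : e ∈ P u v) :
    ReflTransGen (fun p q => (p, q) ∈ copyArcs P) (φ u) e.1 ∧
      ReflTransGen (fun p q => (p, q) ∈ copyArcs P) e.2 (φ v) := by
  have hlift := ReflTransGen.mono (r := fun p q => (p, q) ∈ P u v)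
    (p := fun p q => (p, q) ∈ copyArcs P) fun _ _ h => ⟨u, v, h⟩
  obtain ⟨h1, h2⟩ := (hc.2.1 u v (hc.adj_of_mem he)).reflTransGen_of_mem e he
  exact ⟨hlift _ _ h1, hlift _ _ h2⟩

theorem exists_reflTransGen_image (hc : IsImmersionCopy H A φ P) {x : V}
    (hx : x ∈ copyVerts φ P) : ∃ a b,
      ReflTransGen (fun p q => (p, q) ∈ copyArcs P) (φ a) x ∧
        ReflTransGen (fun p q => (p, q) ∈ copyArcs P) x (φ b) := by
  rcases hx with ⟨a, rfl⟩ | ⟨e, ⟨u, v, he⟩, rfl | rfl⟩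
  · exact ⟨a, a, .refl, .refl⟩
  · obtain ⟨h1, h2⟩ := hc.reflTransGen_of_mem_path he
    exact ⟨u, v, h1, .head ⟨u, v, he⟩ h2⟩
  · obtain ⟨h1, h2⟩ := hc.reflTransGen_of_mem_path he
    exact ⟨u, v, h1.tail ⟨u, v, he⟩, h2⟩

theorem reflTransGen_copyArcs (hc : IsImmersionCopy H A φ P)
    (hstrong : ∀ u v, ReflTransGen H u v) {x y : V} (hx : x ∈ copyVerts φ P)
    (hy : y ∈ copyVerts φ P) : ReflTransGen (fun p q => (p, q) ∈ copyArcs P) x y := by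
  have himage : ∀ u v, H u v → ReflTransGen (fun p q => (p, q) ∈ copyArcs P) (φ u) (φ v) := by
    intro u v huv
    obtain ⟨e, he⟩ := List.exists_mem_of_ne_nil _ (hc.2.1 u v huv).1
    obtain ⟨h1, h2⟩ := hc.reflTransGen_of_mem_path he
    exact h1.trans (.head ⟨u, v, he⟩ h2)
  obtain ⟨-, b, -, hxb⟩ := hc.exists_reflTransGen_image hx
  obtain ⟨a, -, hay, -⟩ := hc.exists_reflTransGen_image hy
  exact hxb.trans ((ReflTransGen.lift' φ himage _ _ (hstrong b a)).trans hay)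

theorem copyVerts_subset_of_closed (hc : IsImmersionCopy H A φ P)
    (hstrong : ∀ u v, ReflTransGen H u v) {S : Set V}
    (hS : ∀ p q, (p, q) ∈ copyArcs P → p ∈ S → q ∈ S) {x : V} (hx : x ∈ copyVerts φ P)
    (hxS : x ∈ S) : copyVerts φ P ⊆ S := by
  intro y hy
  have hxy := hc.reflTransGen_copyArcs hstrong hx hy
  clear hy
  induction hxy with
  | refl => exact hxS
  | tail _ hpq ih => exact hS _ _ hpq ih

variable {N : ℕ} {σ : V ≃ Fin N} {F : Set (V × V)} {α : ℕ}

theorem forall_lt_or_forall_le_of_cutSet_subset (hc : IsImmersionCopy H (deleteArcs A F) φ P)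
    (hstrong : ∀ u v, ReflTransGen H u v) (hF : cutSet A σ α ⊆ F) :
    (∀ x ∈ copyVerts φ P, α < (σ x : ℕ)) ∨ ∀ x ∈ copyVerts φ P, (σ x : ℕ) ≤ α := by
  by_contra! ⟨⟨y, hy, hyα⟩, x, hx, hxα⟩
  have hclosed : ∀ p q, (p, q) ∈ copyArcs P → α < (σ p : ℕ) → α < (σ q : ℕ) := by
    intro p q hpq hp
    obtain ⟨hA, hnF⟩ := hc.adj_of_mem_copyArcs hpq
    by_contra hq
    exact hnF (hF ⟨hA, not_lt.1 hq, hp⟩)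
  exact (hc.copyVerts_subset_of_closed hstrong (S := {x | α < (σ x : ℕ)}) hclosed hx hxα hy
    ).not_ge hyα

end IsImmersionCopy

theorem HasCopyIn.mono {H : W → W → Prop} {A A' : V → V → Prop} {S S' : Set V}
    (hA : ∀ a b, A a b → A' a b) (hS : S ⊆ S') : HasCopyIn H A S → HasCopyIn H A' S' :=
  fun ⟨φ, P, hc, hcS⟩ => ⟨φ, P, hc.mono hA, hcS.trans hS⟩

theorem HasDisjointCopiesIn.cons {H : W → W → Prop} {A : V → V → Prop} {S S' : Set V} {k : ℕ}
    {φ : W → V} {P : W → W → List (V × V)} (hc : IsImmersionCopy H A φ P)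
    (hcS : copyVerts φ P ⊆ S) (hdisj : Disjoint (copyVerts φ P) S') (hS' : S' ⊆ S)
    (h : HasDisjointCopiesIn H A S' k) : HasDisjointCopiesIn H A S (k + 1) := by
  obtain ⟨φs, Ps, hcs, hpw⟩ := h
  refine ⟨Fin.cons φ φs, Fin.cons P Ps,
    Fin.cases ⟨hc, hcS⟩ fun i => ⟨(hcs i).1, (hcs i).2.trans hS'⟩, ?_⟩
  have hfirst : ∀ i, Disjoint (copyVerts φ P) (copyVerts (φs i) (Ps i)) :=
    fun i => hdisj.mono_right (hcs i).2
  intro i i' hii'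
  cases i using Fin.cases <;> cases i' using Fin.cases
  · exact (hii' rfl).elim
  · exact hfirst _
  · exact (hfirst _).symm
  · exact hpw fun h => hii' (congrArg Fin.succ h)

section Ordering

variable {H : W → W → Prop} {A : V → V → Prop} {N : ℕ} {σ : V ≃ Fin N}

theorem not_hasCopyIn_of_cutSet_subset [Nontrivial W] (hstrong : ∀ u v, ReflTransGen H u v)
    {F : Set (V × V)} {t j : ℕ}
    (hj : ∀ i, HasCopyIn H A {x | t ≤ (σ x : ℕ) ∧ (σ x : ℕ) ≤ i} → j ≤ i)
    (hF : cutSet A σ (j - 1) ⊆ F) :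
    ¬ HasCopyIn H (deleteArcs A F) {x | t ≤ (σ x : ℕ) ∧ (σ x : ℕ) ≤ j} := by
  rintro ⟨φ, P, hc, hcS⟩
  have hlevel : ∀ x ∈ copyVerts φ P, (σ x : ℕ) = j := by
    rcases hc.forall_lt_or_forall_le_of_cutSet_subset hstrong hF with hgt | hle
    · intro x hx
      have := hgt x hx
      have := (hcS hx).2
      omega
    · have : j ≤ j - 1 :=
        hj _ ⟨φ, P, hc.mono fun _ _ h => h.1, fun x hx => ⟨(hcS hx).1, hle x hx⟩⟩
      intro x hx
      have := (hcS hx).2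
      omega
  exact hc.copyVerts_nontrivial.not_subsingleton fun x hx y hy =>
    σ.injective (Fin.ext ((hlevel x hx).trans (hlevel y hy).symm))

theorem exists_arcs_destroying_copies_above [Nontrivial W]
    (hstrong : ∀ u v, ReflTransGen H u v) {c : ℕ} (hσ : ∀ α, (cutSet A σ α).ncard ≤ c) :
    ∀ k t, ¬ HasDisjointCopiesIn H A {x | t ≤ (σ x : ℕ)} (k + 1) →
      ∃ F ⊆ {e : V × V | A e.1 e.2}, F.ncard ≤ 2 * k * c ∧
        ¬ HasCopyIn H (deleteArcs A F) {x | t ≤ (σ x : ℕ)} := by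
  intro k
  induction k with
  | zero =>
    rintro t hpack
    refine ⟨∅, Set.empty_subset _, by simp, fun ⟨φ, P, hc, hcS⟩ => hpack ?_⟩
    exact ⟨fun _ => φ, fun _ => P, fun _ => ⟨hc.mono fun _ _ h => h.1, hcS⟩,
      fun i i' h => (h (Subsingleton.elim (α := Fin 1) i i')).elim⟩
  | succ k ih =>
    intro t hpack
    by_cases hex : HasCopyIn H A {x | t ≤ (σ x : ℕ)}
    swap
    · exact ⟨∅, Set.empty_subset _, by simp, fun h => hex (h.mono (fun _ _ h => h.1) le_rfl)⟩
    classical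
    have hfits : ∃ j, HasCopyIn H A {x | t ≤ (σ x : ℕ) ∧ (σ x : ℕ) ≤ j} :=
      ⟨N, hex.mono (fun _ _ h => h) fun x hx => ⟨hx, (σ x).2.le⟩⟩
    set j := Nat.find hfits
    obtain ⟨φ, P, hc, hcS⟩ := Nat.find_spec hfits
    have htj : t ≤ j := by
      obtain ⟨y, hy⟩ := hc.copyVerts_nontrivial.nonempty
      exact (hcS hy).1.trans (hcS hy).2
    obtain ⟨F, hFA, hFc, hF⟩ := ih (j + 1) fun h => hpack <|
      h.cons hc (fun x hx => (hcS hx).1)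
        (Set.disjoint_left.2 fun x hx hx' => by
          have := (hcS hx).2
          have : j + 1 ≤ (σ x : ℕ) := hx'
          omega)
        fun x (hx : j + 1 ≤ (σ x : ℕ)) => show t ≤ (σ x : ℕ) by omega
    refine ⟨cutSet A σ (j - 1) ∪ cutSet A σ j ∪ F, ?_, ?_, ?_⟩
    · exact Set.union_subset (Set.union_subset (fun e he => he.1) fun e he => he.1) hFA
    · calc (cutSet A σ (j - 1) ∪ cutSet A σ j ∪ F).ncard
          ≤ (cutSet A σ (j - 1)).ncard + (cutSet A σ j).ncard + F.ncard :=
            (Set.ncard_union_le _ _).trans (Nat.add_le_add_right (Set.ncard_union_le _ _) _)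
        _ ≤ c + c + 2 * k * c := by gcongr <;> apply hσ
        _ = 2 * (k + 1) * c := by ring
    rintro ⟨φ', P', hc', hcS'⟩
    rcases hc'.forall_lt_or_forall_le_of_cutSet_subset hstrong
      (Set.subset_union_right.trans Set.subset_union_left) with hgt | hle
    · exact hF ⟨φ', P', hc'.mono (fun _ _ h => ⟨h.1, fun hm => h.2 (Or.inr hm)⟩), hgt⟩
    · exact not_hasCopyIn_of_cutSet_subset hstrong (fun _ h => Nat.find_min' hfits h)
        (Set.subset_union_left.trans Set.subset_union_left)
        ⟨φ', P', hc', fun x hx => ⟨hcS' hx, hle x hx⟩⟩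

end Ordering

theorem stmt8_general {V : Type} [Fintype V] (A : V → V → Prop)
    {m : ℕ} (H : Fin m → Fin m → Prop)
    (hsimple : ∀ v, ¬ H v v)
    (hstrong : ∀ u v, Relation.ReflTransGen H u v)
    (harc : ∃ u v, H u v)
    (k c : ℕ)
    (hwidth : ∃ σ : V ≃ Fin (Fintype.card V), ∀ α : ℕ, (cutSet A σ α).ncard ≤ c)
    (hnopack : ¬ ∃ (φs : Fin k → Fin m → V) (Ps : Fin k → Fin m → Fin m → List (V × V)),
      (∀ t, IsImmersionCopy H A (φs t) (Ps t)) ∧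
      ∀ t t', t ≠ t' →
        Disjoint (copyVerts (φs t) (Ps t)) (copyVerts (φs t') (Ps t'))) :
    ∃ F : Set (V × V), F ⊆ {e | A e.1 e.2} ∧ F.ncard ≤ 2 * (k - 1) * c ∧
      ∀ (φ : Fin m → V) (P : Fin m → Fin m → List (V × V)),
        ¬ IsImmersionCopy H (fun a b => A a b ∧ (a, b) ∉ F) φ P := by
  obtain ⟨σ, hσ⟩ := hwidth
  obtain ⟨u, v, huv⟩ := harc
  have : Nontrivial (Fin m) := ⟨u, v, fun h => hsimple v (h ▸ huv)⟩
  obtain _ | k := k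
  · exact (hnopack ⟨finZeroElim, finZeroElim, finZeroElim, finZeroElim⟩).elim
  obtain ⟨F, hFA, hFc, hF⟩ := exists_arcs_destroying_copies_above (σ := σ) hstrong hσ k 0
    fun ⟨φs, Ps, hcs, hpw⟩ => hnopack ⟨φs, Ps, fun i => (hcs i).1, hpw⟩
  exact ⟨F, hFA, by simpa using hFc, fun φ P hc => hF ⟨φ, P, hc, fun x _ => Nat.zero_le _⟩⟩

/-- Let `H` be a strongly connected simple digraph with at least one arc, `k ≥ 1`, and `T`
a tournament admitting a vertex ordering of width at most `c` that does not contain `k`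
pairwise vertex-disjoint immersion copies of `H`. Then there is a set `F` of at most
`2(k-1)c` arcs of `T` such that `T - F` contains no immersion copy of `H`. -/
theorem stmt8 {V : Type} [Fintype V] (A : V → V → Prop) (hT : IsTournament A)
    {m : ℕ} (H : Fin m → Fin m → Prop)
    (hsimple : ∀ v, ¬ H v v)
    (hstrong : ∀ u v, Relation.ReflTransGen H u v)
    (harc : ∃ u v, H u v)
    (k c : ℕ) (hk : 1 ≤ k)
    (hwidth : ∃ σ : V ≃ Fin (Fintype.card V), ∀ α : ℕ, (cutSet A σ α).ncard ≤ c)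
    (hnopack : ¬ ∃ (φs : Fin k → Fin m → V) (Ps : Fin k → Fin m → Fin m → List (V × V)),
      (∀ t, IsImmersionCopy H A (φs t) (Ps t)) ∧
      ∀ t t', t ≠ t' →
        Disjoint (copyVerts (φs t) (Ps t)) (copyVerts (φs t') (Ps t'))) :
    ∃ F : Set (V × V), F ⊆ {e | A e.1 e.2} ∧ F.ncard ≤ 2 * (k - 1) * c ∧
      ∀ (φ : Fin m → V) (P : Fin m → Fin m → List (V × V)),
        ¬ IsImmersionCopy H (fun a b => A a b ∧ (a, b) ∉ F) φ P :=
  stmt8_general A H hsimple hstrong harc k c hwidth hnopack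
end

section
/- Let H be a strongly connected simple digraph, let k >= 1, and suppose every tournament not containing k vertex-disjoint topological minor copies of H has an interval decomposition of width at most p(k) = c*k for a constant c (depending on H). Then for every tournament T not containing k vertex-disjoint topological minor copies of H, there is a set of at most 2*c*k*log2(k) vertices (for k >= 2; 0 vertices for k = 1) intersecting all topological minor copies of H in T. -/
/-- `l` is a directed path (as a list of vertices, without repetitions) from `a` to `b`. -/
def IsVertPath {V : Type} (A : V → V → Prop) (l : List V) (a b : V) : Prop :=
  List.Chain' A l ∧ l.head? = some a ∧ l.getLast? = some b ∧ l.Nodup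

/-- The internal vertices of a path given as a list of vertices. -/
def internals {V : Type} (l : List V) : List V := (l.drop 1).dropLast

/-- `φ` (on vertices) together with vertex-lists `P` (paths for the arcs of `H`) form a
topological minor copy of the digraph `H` inside the digraph `A`: vertices map injectively,
each arc of `H` maps to a directed path between the images of its endpoints, the paths are
internally vertex-disjoint and their internal vertices avoid the images of vertices of `H`. -/
def IsTopMinorCopy {W V : Type} (H : W → W → Prop) (A : V → V → Prop)
    (φ : W → V) (P : W → W → List V) : Prop :=
  Function.Injective φ ∧
  (∀ u v, H u v → IsVertPath A (P u v) (φ u) (φ v)) ∧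
  (∀ u v, ¬ H u v → P u v = []) ∧
  (∀ u v, H u v → ∀ x ∈ internals (P u v), x ∉ Set.range φ) ∧
  (∀ u v u' v', H u v → H u' v' → (u, v) ≠ (u', v') →
    ∀ x ∈ internals (P u v), x ∉ P u' v')

/-- The vertices of a topological minor copy. -/
def tmVerts {W V : Type} (φ : W → V) (P : W → W → List V) : Set V :=
  Set.range φ ∪ {x | ∃ u v, x ∈ P u v}

/-- `I` is an interval decomposition of the tournament with arc relation `A`: each vertex
gets a nonempty integer interval (given by its two endpoints), and whenever the interval of
`u` lies entirely to the left of the interval of `v`, the arc `(u,v)` is present. -/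
def IsIntervalDecomp {V : Type} (A : V → V → Prop) (I : V → ℤ × ℤ) : Prop :=
  (∀ v, (I v).1 ≤ (I v).2) ∧ ∀ u v, (I u).2 < (I v).1 → A u v

/-- The `α`-cut of an interval decomposition: the vertices whose interval contains `α`. -/
def vcut {V : Type} (I : V → ℤ × ℤ) (α : ℤ) : Set V :=
  {v | (I v).1 ≤ α ∧ α ≤ (I v).2}

/-- The digraph with arc relation `A` contains `k` pairwise vertex-disjoint topological
minor copies of `H`. -/
def HasTMPacking {W V : Type} (H : W → W → Prop) (A : V → V → Prop) (k : ℕ) : Prop :=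
  ∃ (φs : Fin k → W → V) (Ps : Fin k → W → W → List V),
    (∀ t, IsTopMinorCopy H A (φs t) (Ps t)) ∧
    ∀ t t', t ≠ t' → Disjoint (tmVerts (φs t) (Ps t)) (tmVerts (φs t') (Ps t'))

/-!
Induction on `k`. Cut an interval decomposition of width at most `c k` at a point `α` such that
the vertices whose intervals end before `α` carry no `⌈k/2⌉` disjoint copies of `H` and those
whose intervals start after `α` carry no `⌊k/2⌋`: if `α + 1` is the least point whose left side
carries `⌈k/2⌉` copies, the right side of `α` is disjoint from that left side.

Every copy of the strongly connected `H` is strongly connected, and a strongly connected set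
missing the cut lies on one side of it, since an arc from the right side to the left side would
contradict the forward arc forced by the decomposition. So the cut together with hitting sets of
the two sides, obtained by induction, meets every copy. The bound follows from
`c k + 2 c k₁ log₂ k₁ + 2 c k₂ log₂ k₂ ≤ 2 c k log₂ k`, using `kᵢ ≤ 2k/3` and
`log₂ (3/2) ≥ 1/2`.
-/

open Relation

section StrongConnectivity

variable {V : Type} {T : V → V → Prop}

def IsStronglyConnectedIn (T : V → V → Prop) (M : Set V) : Prop :=
  ∀ x ∈ M, ∀ y ∈ M, ReflTransGen (fun a b => T a b ∧ b ∈ M) x y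

lemma IsVertPath.reflTransGen_of_mem {M : Set V} {l : List V} {a b : V}
    (hl : IsVertPath T l a b) (hM : ∀ x ∈ l, x ∈ M) {x : V} (hx : x ∈ l) :
    ReflTransGen (fun u v => T u v ∧ v ∈ M) a x ∧
      ReflTransGen (fun u v => T u v ∧ v ∈ M) x b := by
  obtain ⟨hchain, hhead, hlast, -⟩ := hl
  have hR : l.IsChain (fun u v => T u v ∧ v ∈ M) :=
    hchain.imp_of_mem_imp fun _ v _ hv huv => ⟨huv, hM v hv⟩
  obtain ⟨t, rfl⟩ := List.head?_eq_some_iff.mp hhead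
  refine ⟨hR.induction _ _ (fun _ _ h₁ h₂ => h₂.tail h₁) (fun _ => .refl) x hx,
    hR.backwards_induction (ReflTransGen _ · b) _ (fun _ _ h₁ h₂ => h₂.head h₁)
      (fun hne => ?_) x hx⟩
  rw [(List.getLast_eq_iff_getLast?_eq_some hne).mpr hlast]

lemma IsTopMinorCopy.adj_of_mem {W : Type} {H : W → W → Prop} {φ : W → V}
    {P : W → W → List V} (hcopy : IsTopMinorCopy H T φ P) {u v : W} {x : V}
    (hx : x ∈ P u v) : H u v := by
  by_contra huv
  simp [hcopy.2.2.1 u v huv] at hx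

lemma IsTopMinorCopy.isStronglyConnectedIn {W : Type} {H : W → W → Prop}
    (hstrong : ∀ u v, ReflTransGen H u v) {φ : W → V} {P : W → W → List V}
    (hcopy : IsTopMinorCopy H T φ P) : IsStronglyConnectedIn T (tmVerts φ P) := by
  set R := fun a b => T a b ∧ b ∈ tmVerts φ P
  have path (u v : W) (huv : H u v) {x : V} (hx : x ∈ P u v) :
      ReflTransGen R (φ u) x ∧ ReflTransGen R x (φ v) :=
    (hcopy.2.1 u v huv).reflTransGen_of_mem (fun y hy => Or.inr ⟨u, v, hy⟩) hx
  have between (u v : W) : ReflTransGen R (φ u) (φ v) := by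
    induction hstrong u v with
    | refl => exact .refl
    | tail _ hbc ih =>
      exact ih.trans (path _ _ hbc (List.mem_of_getLast? (hcopy.2.1 _ _ hbc).2.2.1)).1
  have to_image : ∀ x ∈ tmVerts φ P, ∃ w, ReflTransGen R x (φ w) := by
    rintro x (⟨w, rfl⟩ | ⟨u, v, hx⟩)
    exacts [⟨w, .refl⟩, ⟨v, (path u v (hcopy.adj_of_mem hx) hx).2⟩]
  have of_image : ∀ x ∈ tmVerts φ P, ∃ w, ReflTransGen R (φ w) x := by
    rintro x (⟨w, rfl⟩ | ⟨u, v, hx⟩)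
    exacts [⟨w, .refl⟩, ⟨u, (path u v (hcopy.adj_of_mem hx) hx).1⟩]
  intro x hx y hy
  obtain ⟨w, hxw⟩ := to_image x hx
  obtain ⟨w', hwy⟩ := of_image y hy
  exact hxw.trans ((between w w').trans hwy)

end StrongConnectivity

section IntervalDecomposition

variable {V : Type} {T : V → V → Prop} {I : V → ℤ × ℤ}

lemma notMem_vcut_iff {α : ℤ} {v : V} : v ∉ vcut I α ↔ (I v).2 < α ∨ α < (I v).1 := by
  simp only [vcut, Set.mem_ofPred_eq, not_and_or, not_le, or_comm]

lemma IsIntervalDecomp.lt_fst_of_reflTransGen (hT : IsTournament T)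
    (hI : IsIntervalDecomp T I) {α : ℤ} {x y : V}
    (hxy : ReflTransGen (fun a b => T a b ∧ b ∉ vcut I α) x y) (hx : α < (I x).1) :
    α < (I y).1 := by
  induction hxy with
  | refl => exact hx
  | @tail a b _ hab ih =>
    refine (notMem_vcut_iff.mp hab.2).resolve_left fun hb => ?_
    have hne : a ≠ b := by rintro rfl; linarith [hI.1 a]
    exact (hT.2 a b hne).mp hab.1 (hI.2 b a (by omega))

lemma IsStronglyConnectedIn.subset_or_subset_of_disjoint_vcut (hT : IsTournament T)
    (hI : IsIntervalDecomp T I) {M : Set V} (hM : IsStronglyConnectedIn T M) {α : ℤ}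
    (hcut : Disjoint M (vcut I α)) :
    M ⊆ {v | (I v).2 < α} ∨ M ⊆ {v | α < (I v).1} := by
  by_cases hright : ∃ y ∈ M, α < (I y).1
  · obtain ⟨y, hy, hyα⟩ := hright
    refine Or.inr fun x hx => hI.lt_fst_of_reflTransGen hT ?_ hyα
    refine ReflTransGen.mono (fun a b hab => ?_) _ _ (hM y hy x hx)
    exact ⟨hab.1, Set.disjoint_left.mp hcut hab.2⟩
  · push Not at hright
    exact Or.inl fun x hx => (notMem_vcut_iff.mp (Set.disjoint_left.mp hcut hx)).resolve_right
      (hright x hx).not_gt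

end IntervalDecomposition

section Packing

variable {W V : Type} {H : W → W → Prop} {A : V → V → Prop}

def HasTMPackingIn (H : W → W → Prop) (A : V → V → Prop) (U : Set V) (k : ℕ) : Prop :=
  ∃ (φs : Fin k → W → V) (Ps : Fin k → W → W → List V),
    (∀ t, IsTopMinorCopy H A (φs t) (Ps t) ∧ tmVerts (φs t) (Ps t) ⊆ U) ∧
    ∀ t t', t ≠ t' → Disjoint (tmVerts (φs t) (Ps t)) (tmVerts (φs t') (Ps t'))

def HitsTMCopies (H : W → W → Prop) (A : V → V → Prop) (S : Set V) : Prop :=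
  ∀ φ P, IsTopMinorCopy H A φ P → ∃ v ∈ S, v ∈ tmVerts φ P

def HitsTMCopiesIn (H : W → W → Prop) (A : V → V → Prop) (U S : Set V) : Prop :=
  ∀ φ P, IsTopMinorCopy H A φ P → tmVerts φ P ⊆ U → ∃ v ∈ S, v ∈ tmVerts φ P

lemma hasTMPacking_of_isEmpty [IsEmpty W] (H : W → W → Prop) (A : V → V → Prop) (k : ℕ) :
    HasTMPacking H A k := by
  refine ⟨fun _ => isEmptyElim, fun _ _ _ => [], fun _ => ?_, fun _ _ _ => ?_⟩
  · exact ⟨isEmptyElim, isEmptyElim, isEmptyElim, isEmptyElim, isEmptyElim⟩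
  · simp [tmVerts, ‹IsEmpty W›]

lemma IsTopMinorCopy.hasTMPacking_one {φ : W → V} {P : W → W → List V}
    (h : IsTopMinorCopy H A φ P) : HasTMPacking H A 1 :=
  ⟨fun _ => φ, fun _ => P, fun _ => h, fun t t' hne => absurd (Subsingleton.elim t t') hne⟩

lemma HasTMPackingIn.nonempty [Nonempty W] {U : Set V} {k : ℕ} (hk : 0 < k)
    (h : HasTMPackingIn H A U k) : U.Nonempty := by
  obtain ⟨φs, Ps, hcopies, -⟩ := h
  exact ⟨_, (hcopies ⟨0, hk⟩).2 (Or.inl ⟨Classical.arbitrary W, rfl⟩)⟩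

lemma HasTMPackingIn.add {U₁ U₂ : Set V} {k₁ k₂ : ℕ} (h₁ : HasTMPackingIn H A U₁ k₁)
    (h₂ : HasTMPackingIn H A U₂ k₂) (hU : Disjoint U₁ U₂) : HasTMPacking H A (k₁ + k₂) := by
  obtain ⟨φ₁, P₁, hc₁, hd₁⟩ := h₁
  obtain ⟨φ₂, P₂, hc₂, hd₂⟩ := h₂
  refine ⟨Fin.addCases φ₁ φ₂, Fin.addCases P₁ P₂,
    Fin.addCases (by simpa using fun i => (hc₁ i).1) (by simpa using fun i => (hc₂ i).1), ?_⟩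
  intro t t' hne
  induction t using Fin.addCases <;> induction t' using Fin.addCases <;>
    simp only [Fin.addCases_left, Fin.addCases_right]
  · exact hd₁ _ _ (by rintro rfl; exact hne rfl)
  · exact hU.mono (hc₁ _).2 (hc₂ _).2
  · exact (hU.mono (hc₁ _).2 (hc₂ _).2).symm
  · exact hd₂ _ _ (by rintro rfl; exact hne rfl)

end Packing

section Transport

open Function

variable {W V V' : Type} {H : W → W → Prop} {T : V → V → Prop} {f : V' → V}

lemma internals_map (f : V' → V) (l : List V') : internals (l.map f) = (internals l).map f := by
  simp only [internals, List.map_drop, List.map_dropLast]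

lemma isVertPath_onFun_iff (hf : Injective f) {l : List V'} {a b : V'} :
    IsVertPath (T on f) l a b ↔ IsVertPath T (l.map f) (f a) (f b) := by
  refine and_congr (List.isChain_map f).symm
    (and_congr ?_ (and_congr ?_ (List.nodup_map_iff hf).symm)) <;>
  simp [hf.eq_iff, Option.map_eq_some_iff]

lemma tmVerts_map (f : V' → V) (φ : W → V') (P : W → W → List V') :
    tmVerts (f ∘ φ) (fun u v => (P u v).map f) = f '' tmVerts φ P := by
  ext x
  simp only [tmVerts, Set.image_union, Set.range_comp, Set.mem_union, Set.mem_ofPred_eq,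
    List.mem_map, Set.mem_image]
  grind

lemma isTopMinorCopy_onFun_iff (hf : Injective f) {φ : W → V'} {P : W → W → List V'} :
    IsTopMinorCopy H (T on f) φ P ↔ IsTopMinorCopy H T (f ∘ φ) (fun u v => (P u v).map f) := by
  simp only [IsTopMinorCopy, hf.of_comp_iff, isVertPath_onFun_iff hf, List.map_eq_nil_iff,
    internals_map, List.forall_mem_map, Set.range_comp, hf.mem_set_image,
    List.mem_map_of_injective hf, comp_apply]

lemma IsTournament.onFun (hT : IsTournament T) (hf : Injective f) : IsTournament (T on f) :=
  ⟨fun v => hT.1 (f v), fun _ _ hab => hT.2 _ _ (hf.ne hab)⟩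

lemma HasTMPacking.hasTMPackingIn_range (hf : Injective f) {k : ℕ}
    (h : HasTMPacking H (T on f) k) : HasTMPackingIn H T (Set.range f) k := by
  obtain ⟨φs, Ps, hcopies, hdisj⟩ := h
  refine ⟨fun t => f ∘ φs t, fun t u v => (Ps t u v).map f, fun t => ⟨?_, ?_⟩, fun t t' htt' => ?_⟩
  · exact (isTopMinorCopy_onFun_iff hf).mp (hcopies t)
  · rw [tmVerts_map]
    exact Set.image_subset_range _ _
  · simp only [tmVerts_map, Set.disjoint_image_iff hf, hdisj t t' htt']

lemma IsTopMinorCopy.exists_onFun [Nonempty W] (hf : Injective f) {φ : W → V}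
    {P : W → W → List V} (hcopy : IsTopMinorCopy H T φ P) (hsub : tmVerts φ P ⊆ Set.range f) :
    ∃ (φ' : W → V') (P' : W → W → List V'), IsTopMinorCopy H (T on f) φ' P' ∧
      tmVerts φ P = f '' tmVerts φ' P' := by
  have : Nonempty V' := (hsub (Or.inl ⟨Classical.arbitrary W, rfl⟩)).nonempty
  have hfg : ∀ x ∈ tmVerts φ P, f (invFun f x) = x := fun x hx => invFun_eq (hsub hx)
  have hφ : f ∘ invFun f ∘ φ = φ := funext fun w => hfg _ (Or.inl ⟨w, rfl⟩)
  have hP : (fun u v => ((P u v).map (invFun f)).map f) = P := by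
    funext u v
    rw [List.map_map]
    exact (List.map_congr_left fun x hx => hfg x (Or.inr ⟨u, v, hx⟩)).trans (List.map_id _)
  refine ⟨invFun f ∘ φ, fun u v => (P u v).map (invFun f), ?_, ?_⟩
  · rwa [isTopMinorCopy_onFun_iff hf, hφ, hP]
  · rw [← tmVerts_map, hφ, hP]

lemma exists_hitsTMCopies_in_of_not_hasTMPackingIn [Nonempty W] [Finite V]
    (hT : IsTournament T) {U : Set V} {j : ℕ} {F : ℝ}
    (hhit : ∀ (n : ℕ) (T' : Fin n → Fin n → Prop), IsTournament T' → ¬ HasTMPacking H T' j →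
      ∃ S : Set (Fin n), (S.ncard : ℝ) ≤ F ∧ HitsTMCopies H T' S)
    (hU : ¬ HasTMPackingIn H T U j) :
    ∃ S : Set V, (S.ncard : ℝ) ≤ F ∧ HitsTMCopiesIn H T U S := by
  obtain ⟨n, ⟨e⟩⟩ := Finite.exists_equiv_fin U
  set f : Fin n → V := Subtype.val ∘ e.symm
  have hf : Injective f := Subtype.val_injective.comp e.symm.injective
  have hrange : Set.range f = U := by simp [f, Set.range_comp]
  obtain ⟨S, hS, hhitS⟩ := hhit n (T on f) (hT.onFun hf) fun h =>
    hU (hrange ▸ h.hasTMPackingIn_range hf)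
  refine ⟨f '' S, by rwa [Set.ncard_image_of_injective _ hf], fun φ P hcopy hsub => ?_⟩
  obtain ⟨φ', P', hcopy', hverts⟩ := hcopy.exists_onFun hf (hrange ▸ hsub)
  obtain ⟨v, hvS, hv⟩ := hhitS φ' P' hcopy'
  exact ⟨f v, Set.mem_image_of_mem f hvS, hverts ▸ Set.mem_image_of_mem f hv⟩

end Transport

section Cut

variable {W V : Type} {H : W → W → Prop} {T : V → V → Prop} {I : V → ℤ × ℤ}

lemma exists_balanced_cut [Nonempty W] [Finite V] (hI : IsIntervalDecomp T I) {k₁ k₂ : ℕ}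
    (hk₁ : 0 < k₁) (hk₂ : 0 < k₂) (hnopack : ¬ HasTMPacking H T (k₁ + k₂)) :
    ∃ α, ¬ HasTMPackingIn H T {v | (I v).2 < α} k₁ ∧
      ¬ HasTMPackingIn H T {v | α < (I v).1} k₂ := by
  by_cases hleft : ∃ α, HasTMPackingIn H T {v | (I v).2 < α} k₁
  · obtain ⟨a, ha⟩ := (Set.finite_range fun v => (I v).1).bddBelow
    have hbdd : ∀ α, HasTMPackingIn H T {v | (I v).2 < α} k₁ → a ≤ α := by
      intro α h
      obtain ⟨v, hv⟩ := h.nonempty hk₁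
      have hav : a ≤ (I v).1 := ha ⟨v, rfl⟩
      have hvα : (I v).2 < α := hv
      linarith [hI.1 v]
    obtain ⟨α, hα, hleast⟩ := Int.exists_least_of_bdd ⟨a, hbdd⟩ hleft
    refine ⟨α - 1, fun h => by linarith [hleast _ h], fun h => hnopack (hα.add h ?_)⟩
    refine Set.disjoint_left.mpr fun v (hl : (I v).2 < α) (hr : α - 1 < (I v).1) => ?_
    linarith [hI.1 v]
  · push Not at hleft
    obtain ⟨b, hb⟩ := (Set.finite_range fun v => (I v).2).bddAbove
    refine ⟨b, hleft b, fun h => ?_⟩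
    obtain ⟨v, hv⟩ := h.nonempty hk₂
    have hvb : (I v).2 ≤ b := hb ⟨v, rfl⟩
    have hbv : b < (I v).1 := hv
    linarith [hI.1 v]

lemma hitsTMCopies_vcut_union (hstrong : ∀ u v, ReflTransGen H u v) (hT : IsTournament T)
    (hI : IsIntervalDecomp T I) {α : ℤ} {SL SR : Set V}
    (hL : HitsTMCopiesIn H T {v | (I v).2 < α} SL)
    (hR : HitsTMCopiesIn H T {v | α < (I v).1} SR) :
    HitsTMCopies H T (vcut I α ∪ SL ∪ SR) := by
  intro φ P hcopy
  by_cases hcut : Disjoint (tmVerts φ P) (vcut I α)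
  · rcases (hcopy.isStronglyConnectedIn hstrong).subset_or_subset_of_disjoint_vcut hT hI hcut
      with h | h
    · obtain ⟨v, hv, hvM⟩ := hL φ P hcopy h
      exact ⟨v, .inl (.inr hv), hvM⟩
    · obtain ⟨v, hv, hvM⟩ := hR φ P hcopy h
      exact ⟨v, .inr hv, hvM⟩
  · obtain ⟨v, hvM, hv⟩ := Set.not_disjoint_iff.mp hcut
    exact ⟨v, .inl (.inl hv), hvM⟩

end Cut

lemma logb_le_logb_sub_half {j k : ℕ} (hj : 1 ≤ j) (hjk : 3 * j ≤ 2 * k) :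
    Real.logb 2 j ≤ Real.logb 2 k - 1 / 2 := by
  have hj0 : (0 : ℝ) < j := by exact_mod_cast hj
  have hk0 : (0 : ℝ) < k := by exact_mod_cast (by omega : 0 < k)
  have half_le : 1 / 2 ≤ Real.logb 2 (3 / 2) := by
    have h := Real.logb_le_logb_of_le one_lt_two two_pos (by norm_num : (2 : ℝ) ≤ (3 / 2) ^ 2)
    rw [Real.logb_pow, Real.logb_self_eq_one one_lt_two] at h
    linarith
  have hjk' : (j : ℝ) ≤ k / (3 / 2) := by
    have : (3 : ℝ) * j ≤ 2 * k := by exact_mod_cast hjk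
    rw [le_div_iff₀ (by norm_num)]
    linarith
  have h := Real.logb_le_logb_of_le one_lt_two hj0 hjk'
  rw [Real.logb_div hk0.ne' (by norm_num)] at h
  linarith

lemma add_mul_logb_add_mul_logb_le {c : ℝ} (hc : 0 ≤ c) {k k₁ k₂ : ℕ} (hsum : k₁ + k₂ = k)
    (h₁ : 1 ≤ k₁) (h₂ : 1 ≤ k₂) (h₁k : 3 * k₁ ≤ 2 * k) (h₂k : 3 * k₂ ≤ 2 * k) :
    c * k + 2 * c * k₁ * Real.logb 2 k₁ + 2 * c * k₂ * Real.logb 2 k₂ ≤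
      2 * c * k * Real.logb 2 k := by
  have e₁ := mul_le_mul_of_nonneg_left (logb_le_logb_sub_half h₁ h₁k)
    (by positivity : 0 ≤ 2 * c * k₁)
  have e₂ := mul_le_mul_of_nonneg_left (logb_le_logb_sub_half h₂ h₂k)
    (by positivity : 0 ≤ 2 * c * k₂)
  have hcast : (k₁ : ℝ) + k₂ = k := by exact_mod_cast hsum
  linear_combination e₁ + e₂ + (2 * c * Real.logb 2 k - c) * hcast

theorem exists_hitsTMCopies_ncard_le {W : Type} [Nonempty W] {H : W → W → Prop}
    (hstrong : ∀ u v, ReflTransGen H u v) {c : ℝ} (hc : 0 ≤ c)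
    (hhyp : ∀ (k : ℕ), 1 ≤ k → ∀ (n : ℕ) (T : Fin n → Fin n → Prop),
      IsTournament T → ¬ HasTMPacking H T k →
      ∃ I : Fin n → ℤ × ℤ, IsIntervalDecomp T I ∧ ∀ α : ℤ, ((vcut I α).ncard : ℝ) ≤ c * k)
    (k : ℕ) (hk : 1 ≤ k) (n : ℕ) (T : Fin n → Fin n → Prop) (hT : IsTournament T)
    (hnopack : ¬ HasTMPacking H T k) :
    ∃ S : Set (Fin n), (S.ncard : ℝ) ≤ 2 * c * k * Real.logb 2 k ∧ HitsTMCopies H T S := by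
  induction k using Nat.strong_induction_on generalizing n with
  | _ k ih =>
  obtain rfl | hk2 := hk.eq_or_lt
  · exact ⟨∅, by simp, fun φ P hcopy => absurd hcopy.hasTMPacking_one hnopack⟩
  obtain ⟨I, hI, hwidth⟩ := hhyp k hk n T hT hnopack
  set k₁ := (k + 1) / 2
  set k₂ := k / 2
  have hsum : k₁ + k₂ = k := by omega
  obtain ⟨α, hL, hR⟩ := exists_balanced_cut hI (by omega) (by omega) (hsum ▸ hnopack)
  obtain ⟨SL, hSL, hitL⟩ :=
    exists_hitsTMCopies_in_of_not_hasTMPackingIn hT (ih k₁ (by omega) (by omega)) hL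
  obtain ⟨SR, hSR, hitR⟩ :=
    exists_hitsTMCopies_in_of_not_hasTMPackingIn hT (ih k₂ (by omega) (by omega)) hR
  refine ⟨vcut I α ∪ SL ∪ SR, ?_, hitsTMCopies_vcut_union hstrong hT hI hitL hitR⟩
  have hcard : ((vcut I α ∪ SL ∪ SR).ncard : ℝ) ≤ (vcut I α).ncard + SL.ncard + SR.ncard := by
    exact_mod_cast (Set.ncard_union_le _ _).trans (Nat.add_le_add_right (Set.ncard_union_le _ _) _)
  have hsplit := add_mul_logb_add_mul_logb_le hc hsum (by omega) (by omega) (by omega) (by omega)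
  linarith [hwidth α]

theorem stmt11_general {m : ℕ} (H : Fin m → Fin m → Prop)
    (hstrong : ∀ u v, Relation.ReflTransGen H u v)
    (c : ℝ) (hc : 0 < c)
    (hhyp : ∀ (k : ℕ), 1 ≤ k → ∀ (n : ℕ) (T : Fin n → Fin n → Prop),
      IsTournament T → ¬ HasTMPacking H T k →
      ∃ I : Fin n → ℤ × ℤ, IsIntervalDecomp T I ∧
        ∀ α : ℤ, ((vcut I α).ncard : ℝ) ≤ c * k)
    (k : ℕ) (hk : 1 ≤ k)
    (n : ℕ) (T : Fin n → Fin n → Prop) (hT : IsTournament T)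
    (hnopack : ¬ HasTMPacking H T k) :
    ∃ S : Set (Fin n),
      (if k = 1 then S = ∅
        else (S.ncard : ℝ) ≤ 2 * c * k * Real.logb 2 k) ∧
      ∀ (φ : Fin m → Fin n) (P : Fin m → Fin m → List (Fin n)),
        IsTopMinorCopy H T φ P → ∃ v ∈ S, v ∈ tmVerts φ P := by
  rcases isEmpty_or_nonempty (Fin m) with hm | hm
  · exact absurd (hasTMPacking_of_isEmpty H T k) hnopack
  by_cases hk1 : k = 1
  · subst hk1
    exact ⟨∅, by simp, fun φ P hcopy => absurd hcopy.hasTMPacking_one hnopack⟩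
  obtain ⟨S, hS, hhit⟩ := exists_hitsTMCopies_ncard_le hstrong hc.le hhyp k hk n T hT hnopack
  exact ⟨S, by rwa [if_neg hk1], hhit⟩

/-- Let `H` be a strongly connected simple digraph and suppose that for every `k ≥ 1`,
every tournament not containing `k` vertex-disjoint topological minor copies of `H` admits
an interval decomposition of width at most `c * k`. Then for every `k ≥ 1` and every
tournament `T` not containing `k` vertex-disjoint topological minor copies of `H`, there
is a set of at most `2 c k log₂ k` vertices (for `k ≥ 2`; the empty set for `k = 1`)
intersecting all topological minor copies of `H` in `T`. -/
theorem stmt11 {m : ℕ} (H : Fin m → Fin m → Prop)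
    (hsimple : ∀ v, ¬ H v v)
    (hstrong : ∀ u v, Relation.ReflTransGen H u v)
    (c : ℝ) (hc : 0 < c)
    (hhyp : ∀ (k : ℕ), 1 ≤ k → ∀ (n : ℕ) (T : Fin n → Fin n → Prop),
      IsTournament T → ¬ HasTMPacking H T k →
      ∃ I : Fin n → ℤ × ℤ, IsIntervalDecomp T I ∧
        ∀ α : ℤ, ((vcut I α).ncard : ℝ) ≤ c * k)
    (k : ℕ) (hk : 1 ≤ k)
    (n : ℕ) (T : Fin n → Fin n → Prop) (hT : IsTournament T)
    (hnopack : ¬ HasTMPacking H T k) :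
    ∃ S : Set (Fin n),
      (if k = 1 then S = ∅
        else (S.ncard : ℝ) ≤ 2 * c * k * Real.logb 2 k) ∧
      ∀ (φ : Fin m → Fin n) (P : Fin m → Fin m → List (Fin n)),
        IsTopMinorCopy H T φ P → ∃ v ∈ S, v ∈ tmVerts φ P :=
  stmt11_general H hstrong c hc hhyp k hk n T hT hnopack
end

section
/- Let T be a tournament with interval decomposition I of width at most p, where all interval endpoints are distinct. For any integer alpha, every strongly connected subgraph of T with at least two vertices either has all its vertices in I[0, alpha], or has all its vertices outside I[0, alpha], or contains a vertex v with alpha in I(v). -/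
/-- Let `T` be a tournament with an interval decomposition `I` of width at most `p`, with
nonnegative and pairwise distinct interval endpoints. For any integer `α`, every strongly
connected subgraph of `T` with at least two vertices (given by its vertex set `W`) either
has all vertices in `I[0, α]`, or all vertices outside `I[0, α]`, or contains a vertex `v`
with `α ∈ I(v)`. -/
theorem stmt12 {V : Type} [Fintype V] (A : V → V → Prop) (hT : IsTournament A)
    (I : V → ℤ × ℤ) (hI : IsIntervalDecomp A I)
    (hnonneg : ∀ v, 0 ≤ (I v).1)
    (hdistinct : ∀ u v : V, u ≠ v →
      (I u).1 ≠ (I v).1 ∧ (I u).2 ≠ (I v).2 ∧ (I u).1 ≠ (I v).2)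
    (hproper : ∀ v, (I v).1 ≠ (I v).2)
    (p : ℕ) (hwidth : ∀ α : ℤ, (vcut I α).ncard ≤ p)
    (α : ℤ) (W : Set V)
    (hstrong : ∀ u v, u ∈ W → v ∈ W →
      Relation.ReflTransGen (fun a b => A a b ∧ a ∈ W ∧ b ∈ W) u v)
    (hW2 : ∃ u v, u ∈ W ∧ v ∈ W ∧ u ≠ v) :
    (∀ v ∈ W, 0 ≤ (I v).1 ∧ (I v).2 ≤ α) ∨
    (∀ v ∈ W, ¬ (0 ≤ (I v).1 ∧ (I v).2 ≤ α)) ∨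
    (∃ v ∈ W, (I v).1 ≤ α ∧ α ≤ (I v).2) := by
  by_contra hcon
  push_neg at hcon
  obtain ⟨h1, h2, h3⟩ := hcon
  obtain ⟨v, hvW, hv⟩ := h1
  obtain ⟨w, hwW, hw⟩ := h2
  -- classify: every vertex of W is low (.2 < α) or high (α < .1)
  have hclass : ∀ x ∈ W, (I x).2 < α ∨ α < (I x).1 := by
    intro x hx
    rcases lt_or_ge α (I x).1 with h | h
    · exact Or.inr h
    · exact Or.inl (h3 x hx h)
  -- v is high
  have hvhigh : α < (I v).1 := by
    rcases hclass v hvW with h | h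
    · exact absurd (hv (hnonneg v)) (not_lt.mpr (le_of_lt h))
    · exact h
  -- w is low
  have hwlow : (I w).2 < α := by
    rcases hclass w hwW with h | h
    · exact h
    · exact absurd hw.2 (not_le.mpr (lt_of_lt_of_le h (hI.1 w)))
  -- every vertex reachable from v within W is high
  have key : ∀ x, Relation.ReflTransGen (fun a b => A a b ∧ a ∈ W ∧ b ∈ W) v x →
      α < (I x).1 := by
    intro x hx
    induction hx with
    | refl => exact hvhigh
    | tail _ hstep ih =>
      rename_i b c _
      obtain ⟨hAbc, hbW, hcW⟩ := hstep
      rcases hclass c hcW with hlow | hhigh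
      · exfalso
        have hAcb : A c b := hI.2 c b (lt_trans hlow ih)
        have hne : b ≠ c := by
          rintro rfl; exact hT.1 b hAbc
        exact ((hT.2 b c hne).mp hAbc) hAcb
      · exact hhigh
  have := key w (hstrong v w hvW hwW)
  exact absurd (lt_trans this (lt_of_le_of_lt (hI.1 w) hwlow)) (lt_irrefl α)
end
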